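/- Let d ≥ 1, ε ∈ (0,1], n ≥ 1, and suppose σ : ℝ → ℝ (twice continuously differentiable) and A : ℝ^d → ℝ^{d×d} satisfy the first inequality of the Lipschitz-type Assumption with constant M ≥ 0. Fix parameters (a_i, w_i, b_i) ∈ ℝ × ℝ^{2d} × ℝ with w_i = (w_{i,x}, w_{i,y}), i = 1,…,n, and let ξ₁,…,ξ_n be independent Rademacher random variables (P(ξ_i = 1) = P(ξ_i = −1) = 1/2). Then E_ξ [ sup_{z=(x,y) ∈ [0,1]^{2d}} (1/n) Σ_{i=1}^n ξ_i a_i w_{i,x}^T A(x) w_{i,x} σ''((w_i·z + b_i)/ε) ] ≤ ε^{−1} M · E_ξ ‖ (1/n) Σ_{i=1}^n ξ_i |a_i| (‖w_i‖₁ + |b_i|)² w_i ‖₁. -/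
import Mathlib


open MeasureTheory Real

noncomputable section

/-- Vectors in `ℝ^d`. -/
abbrev Vec (d : ℕ) := Fin d → ℝ

/-- Inner product on `ℝ^{2d}`, with vectors split as pairs `(x-part, y-part)`. -/
def dot2 {d : ℕ} (w z : Vec d × Vec d) : ℝ :=
  (∑ j, w.1 j * z.1 j) + (∑ j, w.2 j * z.2 j)

/-- ℓ¹ norm on `ℝ^{2d}`. -/
def l1 {d : ℕ} (w : Vec d × Vec d) : ℝ :=
  (∑ j, |w.1 j|) + (∑ j, |w.2 j|)

/-- Quadratic form `v^T B v`. -/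
def quadForm {d : ℕ} (B : Matrix (Fin d) (Fin d) ℝ) (v : Vec d) : ℝ :=
  ∑ j, ∑ k, v j * B j k * v k

/-- Membership of `z = (x, y)` in the unit cube `[0,1]^{2d}`. -/
def InCube {d : ℕ} (z : Vec d × Vec d) : Prop :=
  (∀ j, z.1 j ∈ Set.Icc (0:ℝ) 1) ∧ (∀ j, z.2 j ∈ Set.Icc (0:ℝ) 1)

/-- The Rademacher sign (`+1` or `-1`) associated with a Boolean. A tuple of `n` independent
Rademacher random variables is distributed as the uniform measure on `{-1,1}^n`, so the
expectation of any functional of `(ξ₁, …, ξ_n)` equals the average over all `2^n` sign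
patterns `s : Fin n → Bool`. -/
def rsign (s : Bool) : ℝ := if s then 1 else -1

lemma l1_nonneg {d : ℕ} (u : Vec d × Vec d) : 0 ≤ l1 u :=
  add_nonneg (Finset.sum_nonneg fun _ _ => abs_nonneg _)
    (Finset.sum_nonneg fun _ _ => abs_nonneg _)

lemma dot2_smul_left {d : ℕ} (c : ℝ) (u z : Vec d × Vec d) : dot2 (c • u) z = c * dot2 u z := by
  simp [dot2, Finset.mul_sum, mul_assoc, mul_add]

lemma dot2_sum_left {d n : ℕ} (f : Fin n → Vec d × Vec d) (z : Vec d × Vec d) :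
    dot2 (∑ i, f i) z = ∑ i, dot2 (f i) z := by
  simp [dot2, Prod.fst_sum, Prod.snd_sum, Finset.sum_apply, Finset.sum_mul,
    Finset.sum_add_distrib]
  rw [Finset.sum_comm, Finset.sum_comm (γ := Fin d)]

lemma quadForm_smul {d : ℕ} (B : Matrix (Fin d) (Fin d) ℝ) (c : ℝ) (v : Vec d) :
    quadForm B (c • v) = c ^ 2 * quadForm B v := by
  simp [quadForm, Finset.mul_sum]
  congr 1; funext j; congr 1; funext k; ring

lemma l1_smul {d : ℕ} (c : ℝ) (u : Vec d × Vec d) : l1 (c • u) = |c| * l1 u := by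
  simp [l1, abs_mul, Finset.mul_sum, mul_add]

lemma abs_dot2_le_l1 {d : ℕ} (u : Vec d × Vec d) {z : Vec d × Vec d} (hz : InCube z) :
    |dot2 u z| ≤ l1 u := by
  refine (abs_add_le _ _).trans (add_le_add ?_ ?_)
  · refine (Finset.abs_sum_le_sum_abs _ _).trans (Finset.sum_le_sum fun j _ => ?_)
    rw [abs_mul]
    have := (hz.1 j)
    nlinarith [abs_nonneg (u.1 j), abs_of_nonneg this.1, this.2]
  · refine (Finset.abs_sum_le_sum_abs _ _).trans (Finset.sum_le_sum fun j _ => ?_)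
    rw [abs_mul]
    have := (hz.2 j)
    nlinarith [abs_nonneg (u.2 j), abs_of_nonneg this.1, this.2]

lemma abs_rsign (x : Bool) : |rsign x| = 1 := by cases x <;> simp [rsign]

lemma rsign_not (x : Bool) : rsign (!x) = -rsign x := by cases x <;> simp [rsign]

lemma lip_step {d : ℕ} (σ : ℝ → ℝ) (A : Vec d → Matrix (Fin d) (Fin d) ℝ) (M : ℝ)
    (hLip : ∀ v : Vec d × Vec d, ∀ b : ℝ, ∀ z₁ z₂ : Vec d × Vec d,
      InCube z₁ → InCube z₂ →
      |deriv (deriv σ) (dot2 v z₁ + b) * quadForm (A z₁.1) v.1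
          - deriv (deriv σ) (dot2 v z₂ + b) * quadForm (A z₂.1) v.1|
        ≤ (l1 v + |b|) ^ 2 * M * |dot2 v z₁ - dot2 v z₂|)
    {ε : ℝ} (hε0 : 0 < ε) (ai bi : ℝ) (wi : Vec d × Vec d)
    (z₁ z₂ : Vec d × Vec d) (h₁ : InCube z₁) (h₂ : InCube z₂) :
    |ai * quadForm (A z₁.1) wi.1 * deriv (deriv σ) ((dot2 wi z₁ + bi) / ε)
      - ai * quadForm (A z₂.1) wi.1 * deriv (deriv σ) ((dot2 wi z₂ + bi) / ε)|
    ≤ ε⁻¹ * M * (|ai| * (l1 wi + |bi|) ^ 2) * |dot2 wi z₁ - dot2 wi z₂| := by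
  have hεne : ε ≠ 0 := ne_of_gt hε0
  have hinv : (0:ℝ) < ε⁻¹ := inv_pos.mpr hε0
  have key := hLip (ε⁻¹ • wi) (bi / ε) z₁ z₂ h₁ h₂
  rw [dot2_smul_left, dot2_smul_left] at key
  have hfst : (ε⁻¹ • wi).1 = ε⁻¹ • wi.1 := rfl
  rw [hfst, quadForm_smul, quadForm_smul, l1_smul, abs_of_pos hinv] at key
  have harg1 : ε⁻¹ * dot2 wi z₁ + bi / ε = (dot2 wi z₁ + bi) / ε := by
    field_simp
  have harg2 : ε⁻¹ * dot2 wi z₂ + bi / ε = (dot2 wi z₂ + bi) / ε := by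
    field_simp
  rw [harg1, harg2] at key
  have hb : |bi / ε| = ε⁻¹ * |bi| := by
    rw [abs_div, abs_of_pos hε0, div_eq_inv_mul]
  rw [hb] at key
  have hΔ : ε⁻¹ * dot2 wi z₁ - ε⁻¹ * dot2 wi z₂ = ε⁻¹ * (dot2 wi z₁ - dot2 wi z₂) := by ring
  rw [hΔ, abs_mul, abs_of_pos hinv] at key
  set D₁ := deriv (deriv σ) ((dot2 wi z₁ + bi) / ε) with hD₁
  set D₂ := deriv (deriv σ) ((dot2 wi z₂ + bi) / ε) with hD₂
  set Q₁ := quadForm (A z₁.1) wi.1 with hQ₁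
  set Q₂ := quadForm (A z₂.1) wi.1 with hQ₂
  set Δ := |dot2 wi z₁ - dot2 wi z₂| with hΔa
  have hΔ0 : 0 ≤ Δ := abs_nonneg _
  have hlhs : D₁ * (ε⁻¹ ^ 2 * Q₁) - D₂ * (ε⁻¹ ^ 2 * Q₂) = ε⁻¹ ^ 2 * (D₁ * Q₁ - D₂ * Q₂) := by ring
  rw [hlhs, abs_mul, abs_of_nonneg (by positivity : (0:ℝ) ≤ ε⁻¹ ^ 2)] at key
  have hr : (ε⁻¹ * l1 wi + ε⁻¹ * |bi|) ^ 2 * M * (ε⁻¹ * Δ)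
      = ε⁻¹ ^ 2 * ((l1 wi + |bi|) ^ 2 * M * (ε⁻¹ * Δ)) := by ring
  rw [hr] at key
  have key2 : |D₁ * Q₁ - D₂ * Q₂| ≤ (l1 wi + |bi|) ^ 2 * M * (ε⁻¹ * Δ) :=
    le_of_mul_le_mul_left key (by positivity)
  have hgl : ai * Q₁ * D₁ - ai * Q₂ * D₂ = ai * (D₁ * Q₁ - D₂ * Q₂) := by ring
  rw [hgl, abs_mul]
  calc |ai| * |D₁ * Q₁ - D₂ * Q₂|
      ≤ |ai| * ((l1 wi + |bi|) ^ 2 * M * (ε⁻¹ * Δ)) :=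
        mul_le_mul_of_nonneg_left key2 (abs_nonneg ai)
    _ = ε⁻¹ * M * (|ai| * (l1 wi + |bi|) ^ 2) * Δ := by ring

lemma core_contraction {T : Type*} [Nonempty T] (G F t : T → ℝ) (L bG bLt : ℝ)
    (hLip : ∀ z₁ z₂ : T, |F z₁ - F z₂| ≤ L * |t z₁ - t z₂|)
    (hbG : ∀ z, |G z| ≤ bG) (hbLt : ∀ z, |L * t z| ≤ bLt) :
    (⨆ z, G z + F z) + (⨆ z, G z - F z)
      ≤ (⨆ z, G z + L * t z) + (⨆ z, G z - L * t z) := by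
  have hb1 : BddAbove (Set.range fun z => G z + L * t z) := by
    refine ⟨bG + bLt, ?_⟩; rintro _ ⟨z, rfl⟩
    exact (le_abs_self _).trans ((abs_add_le _ _).trans (add_le_add (hbG z) (hbLt z)))
  have hb2 : BddAbove (Set.range fun z => G z - L * t z) := by
    refine ⟨bG + bLt, ?_⟩; rintro _ ⟨z, rfl⟩
    exact (le_abs_self _).trans ((abs_sub _ _).trans (add_le_add (hbG z) (hbLt z)))
  set R := (⨆ z, G z + L * t z) + (⨆ z, G z - L * t z) with hR
  have key : ∀ z₁ z₂ : T, (G z₁ + F z₁) + (G z₂ - F z₂) ≤ R := by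
    intro z₁ z₂
    have h1 : F z₁ - F z₂ ≤ L * |t z₁ - t z₂| := (le_abs_self _).trans (hLip z₁ z₂)
    rcases le_total (t z₂) (t z₁) with hc | hc
    · have h2 : |t z₁ - t z₂| = t z₁ - t z₂ := abs_of_nonneg (by linarith)
      have e1 : G z₁ + L * t z₁ ≤ ⨆ z, G z + L * t z := le_ciSup hb1 z₁
      have e2 : G z₂ - L * t z₂ ≤ ⨆ z, G z - L * t z := le_ciSup hb2 z₂
      rw [h2] at h1
      rw [hR]; nlinarith
    · have h2 : |t z₁ - t z₂| = t z₂ - t z₁ := by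
        rw [abs_sub_comm]; exact abs_of_nonneg (by linarith)
      have e1 : G z₂ + L * t z₂ ≤ ⨆ z, G z + L * t z := le_ciSup hb1 z₂
      have e2 : G z₁ - L * t z₁ ≤ ⨆ z, G z - L * t z := le_ciSup hb2 z₁
      rw [h2] at h1
      rw [hR]; nlinarith
  have step1 : ∀ z₁ : T, (G z₁ + F z₁) + (⨆ z, G z - F z) ≤ R := by
    intro z₁
    have : (⨆ z, G z - F z) ≤ R - (G z₁ + F z₁) :=
      ciSup_le fun z₂ => by linarith [key z₁ z₂]
    linarith
  have step2 : (⨆ z, G z + F z) ≤ R - (⨆ z, G z - F z) :=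
    ciSup_le fun z₁ => by linarith [step1 z₁]
  linarith

lemma contraction_general {T : Type*} [Nonempty T] {n : ℕ}
    (h t : Fin n → T → ℝ) (C K : Fin n → ℝ)
    (hlip : ∀ i (z₁ z₂ : T), |h i z₁ - h i z₂| ≤ C i * |t i z₁ - t i z₂|)
    (hbh : ∀ i z, |h i z| ≤ K i) (hbt : ∀ i z, |C i * t i z| ≤ K i) :
    (∑ s : Fin n → Bool, ⨆ z : T, ∑ i, rsign (s i) * h i z)
      ≤ ∑ s : Fin n → Bool, ⨆ z : T, ∑ i, rsign (s i) * (C i * t i z) := by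
  classical
  set φ : Finset (Fin n) → Fin n → T → ℝ :=
    fun S i z => if i ∈ S then C i * t i z else h i z with hφ
  set E : Finset (Fin n) → ℝ :=
    fun S => ∑ s : Fin n → Bool, ⨆ z : T, ∑ i, rsign (s i) * φ S i z with hE
  have hφb : ∀ S i z, |φ S i z| ≤ K i := by
    intro S i z
    simp only [hφ]
    split_ifs with hi
    · exact hbt i z
    · exact hbh i z
  have hsumb : ∀ (S : Finset (Fin n)) (u : Finset (Fin n)) (s : Fin n → Bool) (z : T),
      |∑ j ∈ u, rsign (s j) * φ S j z| ≤ ∑ j ∈ u, K j := by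
    intro S u s z
    refine (Finset.abs_sum_le_sum_abs _ _).trans (Finset.sum_le_sum fun j _ => ?_)
    rw [abs_mul, abs_rsign, one_mul]
    exact hφb S j z
  -- one-step
  have hstep : ∀ (S : Finset (Fin n)) (i : Fin n), i ∉ S → E S ≤ E (insert i S) := by
    intro S i hi
    set fl : (Fin n → Bool) → (Fin n → Bool) := fun s => Function.update s i (!(s i)) with hfl
    have hfl_i : ∀ s, fl s i = !(s i) := fun s => Function.update_self i _ s
    have hfl_ne : ∀ s j, j ≠ i → fl s j = s j := fun s j hj => Function.update_of_ne hj _ s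
    have hinv : Function.Involutive fl := by
      intro s; funext j
      by_cases hj : j = i
      · subst hj; simp [hfl_i, hfl_ne]
      · rw [hfl_ne _ _ hj, hfl_ne _ _ hj]
    have hflipsum : ∀ g : (Fin n → Bool) → ℝ, ∑ s, g (fl s) = ∑ s, g s := fun g =>
      Equiv.sum_comp hinv.toPerm g
    have hpair : ∀ s : Fin n → Bool,
        (⨆ z : T, ∑ j, rsign (s j) * φ S j z) + (⨆ z : T, ∑ j, rsign (fl s j) * φ S j z)
        ≤ (⨆ z : T, ∑ j, rsign (s j) * φ (insert i S) j z)
          + (⨆ z : T, ∑ j, rsign (fl s j) * φ (insert i S) j z) := by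
      intro s
      set G : T → ℝ := fun z => ∑ j ∈ Finset.univ.erase i, rsign (s j) * φ S j z with hG
      set F : T → ℝ := fun z => rsign (s i) * h i z with hF
      have hGb : ∀ z, |G z| ≤ ∑ j ∈ Finset.univ.erase i, K j := fun z => hsumb S _ s z
      have hbLt : ∀ z, |C i * t i z| ≤ K i := fun z => hbt i z
      have hFlip : ∀ (z₁ z₂ : T), |F z₁ - F z₂| ≤ C i * |t i z₁ - t i z₂| := by
        intro z₁ z₂
        have : F z₁ - F z₂ = rsign (s i) * (h i z₁ - h i z₂) := by simp only [hF]; ring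
        rw [this, abs_mul, abs_rsign, one_mul]
        exact hlip i z₁ z₂
      have hGsame : ∀ (S' : Finset (Fin n)) (z : T),
          ∑ j ∈ Finset.univ.erase i, rsign (fl s j) * φ S' j z
            = ∑ j ∈ Finset.univ.erase i, rsign (s j) * φ S' j z := by
        intro S' z
        refine Finset.sum_congr rfl fun j hj => ?_
        rw [hfl_ne _ _ (Finset.ne_of_mem_erase hj)]
      have hGins : ∀ z : T, ∑ j ∈ Finset.univ.erase i, rsign (s j) * φ (insert i S) j z = G z := by
        intro z
        refine Finset.sum_congr rfl fun j hj => ?_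
        have hji : j ≠ i := Finset.ne_of_mem_erase hj
        simp only [hφ, Finset.mem_insert, hji, false_or]
      have hsplit : ∀ (S' : Finset (Fin n)) (s' : Fin n → Bool) (z : T),
          ∑ j, rsign (s' j) * φ S' j z
            = rsign (s' i) * φ S' i z + ∑ j ∈ Finset.univ.erase i, rsign (s' j) * φ S' j z :=
        fun S' s' z => (Finset.add_sum_erase _ _ (Finset.mem_univ i)).symm
      have hφSi : ∀ z : T, φ S i z = h i z := by
        intro z; simp only [hφ, hi, if_false]
      have hφIi : ∀ z : T, φ (insert i S) i z = C i * t i z := by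
        intro z; simp only [hφ, Finset.mem_insert_self, if_true]
      have e1 : (⨆ z : T, ∑ j, rsign (s j) * φ S j z) = ⨆ z : T, G z + F z := by
        refine iSup_congr fun z => ?_
        rw [hsplit, hφSi]; simp only [hG, hF]; ring
      have e2 : (⨆ z : T, ∑ j, rsign (fl s j) * φ S j z) = ⨆ z : T, G z - F z := by
        refine iSup_congr fun z => ?_
        rw [hsplit, hφSi, hGsame, hfl_i, rsign_not]
        simp only [hG, hF]; ring
      have core := core_contraction G F (t i) (C i)
        (∑ j ∈ Finset.univ.erase i, K j) (K i) hFlip hGb hbLt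
      cases hsi : s i
      · have e3 : (⨆ z : T, ∑ j, rsign (s j) * φ (insert i S) j z)
            = ⨆ z : T, G z - C i * t i z := by
          refine iSup_congr fun z => ?_
          rw [hsplit, hφIi, hGins, hsi]; simp [rsign]; try ring
        have e4 : (⨆ z : T, ∑ j, rsign (fl s j) * φ (insert i S) j z)
            = ⨆ z : T, G z + C i * t i z := by
          refine iSup_congr fun z => ?_
          rw [hsplit, hφIi, hGsame, hGins, hfl_i, rsign_not, hsi]; simp [rsign]; try ring
        rw [e1, e2, e3, e4]; linarith
      · have e3 : (⨆ z : T, ∑ j, rsign (s j) * φ (insert i S) j z)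
            = ⨆ z : T, G z + C i * t i z := by
          refine iSup_congr fun z => ?_
          rw [hsplit, hφIi, hGins, hsi]; simp [rsign]; try ring
        have e4 : (⨆ z : T, ∑ j, rsign (fl s j) * φ (insert i S) j z)
            = ⨆ z : T, G z - C i * t i z := by
          refine iSup_congr fun z => ?_
          rw [hsplit, hφIi, hGsame, hGins, hfl_i, rsign_not, hsi]; simp [rsign]; try ring
        rw [e1, e2, e3, e4]; linarith
    have hdouble : E S + E S ≤ E (insert i S) + E (insert i S) := by
      have q1 : E S = ∑ s : Fin n → Bool, ⨆ z : T, ∑ j, rsign (fl s j) * φ S j z :=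
        (hflipsum _).symm
      have q2 : E (insert i S)
          = ∑ s : Fin n → Bool, ⨆ z : T, ∑ j, rsign (fl s j) * φ (insert i S) j z :=
        (hflipsum _).symm
      calc E S + E S
          = ∑ s : Fin n → Bool, ((⨆ z : T, ∑ j, rsign (s j) * φ S j z)
              + (⨆ z : T, ∑ j, rsign (fl s j) * φ S j z)) := by
            rw [Finset.sum_add_distrib]; rw [hE] at *; rw [← q1]
        _ ≤ ∑ s : Fin n → Bool, ((⨆ z : T, ∑ j, rsign (s j) * φ (insert i S) j z)
              + (⨆ z : T, ∑ j, rsign (fl s j) * φ (insert i S) j z)) :=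
            Finset.sum_le_sum fun s _ => hpair s
        _ = E (insert i S) + E (insert i S) := by
            rw [Finset.sum_add_distrib]; rw [hE] at *; rw [← q2]
    linarith
  have hmono : ∀ S : Finset (Fin n), E Sᶜ ≤ E Finset.univ := by
    intro S
    induction S using Finset.induction_on with
    | empty => rw [Finset.compl_empty]
    | @insert a S ha ih =>
      rw [Finset.compl_insert]
      by_cases hmem : a ∈ Sᶜ
      · calc E (Sᶜ.erase a) ≤ E (insert a (Sᶜ.erase a)) :=
              hstep _ a (Finset.notMem_erase a _)
          _ = E Sᶜ := by rw [Finset.insert_erase hmem]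
          _ ≤ E Finset.univ := ih
      · rw [Finset.erase_eq_of_notMem hmem]; exact ih
  have hfinal := hmono Finset.univ
  rw [Finset.compl_univ] at hfinal
  have hl : E ∅ = ∑ s : Fin n → Bool, ⨆ z : T, ∑ i, rsign (s i) * h i z := by
    simp only [hE, hφ, Finset.notMem_empty, if_false]
  have hr : E Finset.univ = ∑ s : Fin n → Bool, ⨆ z : T, ∑ i, rsign (s i) * (C i * t i z) := by
    simp only [hE, hφ, Finset.mem_univ, if_true]
  rw [hl, hr] at hfinal
  exact hfinal

/-- **Rademacher contraction step for the `σ''` term in the proof of Theorem 3.6.**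
`E_ξ[sup_{z ∈ [0,1]^{2d}} (1/n) ∑ ξ_i a_i w_{i,x}^T A(x) w_{i,x} σ''((w_i·z+b_i)/ε)]
  ≤ ε⁻¹ M E_ξ ‖(1/n) ∑ ξ_i |a_i| (‖w_i‖₁+|b_i|)² w_i‖₁`. -/
theorem stmt_5 (d : ℕ) (hd : 1 ≤ d) (n : ℕ) (hn : 1 ≤ n)
    (σ : ℝ → ℝ) (hσ : ContDiff ℝ 2 σ)
    (A : Vec d → Matrix (Fin d) (Fin d) ℝ)
    (M : ℝ) (hM : 0 ≤ M)
    (hLip : ∀ v : Vec d × Vec d, ∀ b : ℝ, ∀ z₁ z₂ : Vec d × Vec d,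
      InCube z₁ → InCube z₂ →
      |deriv (deriv σ) (dot2 v z₁ + b) * quadForm (A z₁.1) v.1
          - deriv (deriv σ) (dot2 v z₂ + b) * quadForm (A z₂.1) v.1|
        ≤ (l1 v + |b|) ^ 2 * M * |dot2 v z₁ - dot2 v z₂|)
    (ε : ℝ) (hε : ε ∈ Set.Ioc (0:ℝ) 1)
    (a : Fin n → ℝ) (w : Fin n → Vec d × Vec d) (b : Fin n → ℝ) :
    (∑ s : Fin n → Bool, ⨆ z : {z : Vec d × Vec d // InCube z},
        (1 / (n:ℝ)) * ∑ i, rsign (s i) * a i * quadForm (A z.1.1) (w i).1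
          * deriv (deriv σ) ((dot2 (w i) z.1 + b i) / ε)) / 2 ^ n
      ≤ ε⁻¹ * M * ((∑ s : Fin n → Bool,
          l1 ((1 / (n:ℝ)) • ∑ i, (rsign (s i) * |a i| * (l1 (w i) + |b i|) ^ 2) • w i))
            / 2 ^ n) := by
  classical
  obtain ⟨hε0, hε1⟩ := hε
  have hinvM : 0 ≤ ε⁻¹ * M := mul_nonneg (inv_nonneg.mpr hε0.le) hM
  have hz₀c : InCube ((fun _ => 0, fun _ => 0) : Vec d × Vec d) :=
    ⟨fun j => ⟨le_rfl, zero_le_one⟩, fun j => ⟨le_rfl, zero_le_one⟩⟩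
  haveI : Nonempty {z : Vec d × Vec d // InCube z} := ⟨⟨_, hz₀c⟩⟩
  set z₀ : {z : Vec d × Vec d // InCube z} := ⟨(fun _ => 0, fun _ => 0), hz₀c⟩ with hz₀
  set hh : Fin n → {z : Vec d × Vec d // InCube z} → ℝ := fun i z =>
    (1 / (n:ℝ)) * (a i * quadForm (A z.1.1) (w i).1
      * deriv (deriv σ) ((dot2 (w i) z.1 + b i) / ε)) with hhh
  set tt : Fin n → {z : Vec d × Vec d // InCube z} → ℝ := fun i z => dot2 (w i) z.1 with htt
  set CC : Fin n → ℝ := fun i =>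
    (1 / (n:ℝ)) * (ε⁻¹ * M * (|a i| * (l1 (w i) + |b i|) ^ 2)) with hCC
  have hn0 : (0:ℝ) ≤ 1 / (n:ℝ) := by positivity
  have hCC0 : ∀ i, 0 ≤ CC i := by
    intro i
    refine mul_nonneg hn0 (mul_nonneg (mul_nonneg (inv_nonneg.mpr hε0.le) hM) ?_)
    positivity
  have hlip' : ∀ i (z₁ z₂ : {z : Vec d × Vec d // InCube z}),
      |hh i z₁ - hh i z₂| ≤ CC i * |tt i z₁ - tt i z₂| := by
    intro i z₁ z₂
    have hd : hh i z₁ - hh i z₂ = (1 / (n:ℝ)) *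
        (a i * quadForm (A z₁.1.1) (w i).1 * deriv (deriv σ) ((dot2 (w i) z₁.1 + b i) / ε)
          - a i * quadForm (A z₂.1.1) (w i).1
            * deriv (deriv σ) ((dot2 (w i) z₂.1 + b i) / ε)) := by
      simp only [hhh]; ring
    rw [hd, abs_mul, abs_of_nonneg hn0]
    have key := lip_step σ A M hLip hε0 (a i) (b i) (w i) z₁.1 z₂.1 z₁.2 z₂.2
    calc (1 / (n:ℝ)) * |a i * quadForm (A z₁.1.1) (w i).1
            * deriv (deriv σ) ((dot2 (w i) z₁.1 + b i) / ε)
          - a i * quadForm (A z₂.1.1) (w i).1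
            * deriv (deriv σ) ((dot2 (w i) z₂.1 + b i) / ε)|
        ≤ (1 / (n:ℝ)) * (ε⁻¹ * M * (|a i| * (l1 (w i) + |b i|) ^ 2)
            * |dot2 (w i) z₁.1 - dot2 (w i) z₂.1|) :=
          mul_le_mul_of_nonneg_left key hn0
      _ = CC i * |tt i z₁ - tt i z₂| := by simp only [hCC, htt]; ring
  set KK : Fin n → ℝ := fun i => CC i * (2 * l1 (w i)) + |hh i z₀| with hKK
  have httb : ∀ i (z : {z : Vec d × Vec d // InCube z}), |tt i z| ≤ l1 (w i) := by
    intro i z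
    exact abs_dot2_le_l1 _ z.2
  have hbh : ∀ i (z : {z : Vec d × Vec d // InCube z}), |hh i z| ≤ KK i := by
    intro i z
    have h1 : |hh i z| ≤ |hh i z - hh i z₀| + |hh i z₀| := by
      calc |hh i z| = |(hh i z - hh i z₀) + hh i z₀| := by ring_nf
        _ ≤ |hh i z - hh i z₀| + |hh i z₀| := abs_add_le _ _
    have h2 : |hh i z - hh i z₀| ≤ CC i * (2 * l1 (w i)) := by
      refine (hlip' i z z₀).trans ?_
      refine mul_le_mul_of_nonneg_left ?_ (hCC0 i)
      calc |tt i z - tt i z₀| ≤ |tt i z| + |tt i z₀| := abs_sub _ _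
        _ ≤ l1 (w i) + l1 (w i) := add_le_add (httb i z) (httb i z₀)
        _ = 2 * l1 (w i) := by ring
    simp only [hKK]; linarith
  have hbt : ∀ i (z : {z : Vec d × Vec d // InCube z}), |CC i * tt i z| ≤ KK i := by
    intro i z
    have : |CC i * tt i z| ≤ CC i * l1 (w i) := by
      rw [abs_mul, abs_of_nonneg (hCC0 i)]
      exact mul_le_mul_of_nonneg_left (httb i z) (hCC0 i)
    have hl1 : 0 ≤ l1 (w i) := l1_nonneg _
    have hc : CC i * l1 (w i) ≤ CC i * (2 * l1 (w i)) := by nlinarith [hCC0 i]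
    simp only [hKK]
    have := abs_nonneg (hh i z₀)
    linarith
  have main := contraction_general hh tt CC KK hlip' hbh hbt
  have eL : ∀ s : Fin n → Bool,
      (⨆ z : {z : Vec d × Vec d // InCube z},
        (1 / (n:ℝ)) * ∑ i, rsign (s i) * a i * quadForm (A z.1.1) (w i).1
          * deriv (deriv σ) ((dot2 (w i) z.1 + b i) / ε))
      = ⨆ z : {z : Vec d × Vec d // InCube z}, ∑ i, rsign (s i) * hh i z := by
    intro s
    refine iSup_congr fun z => ?_
    rw [Finset.mul_sum]
    refine Finset.sum_congr rfl fun i _ => ?_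
    simp only [hhh]; ring
  have eR : ∀ s : Fin n → Bool,
      (⨆ z : {z : Vec d × Vec d // InCube z}, ∑ i, rsign (s i) * (CC i * tt i z))
      ≤ ε⁻¹ * M * l1 ((1 / (n:ℝ)) • ∑ i, (rsign (s i) * |a i| * (l1 (w i) + |b i|) ^ 2) • w i) := by
    intro s
    refine ciSup_le fun z => ?_
    have hdot : dot2 ((1 / (n:ℝ)) • ∑ i, (rsign (s i) * |a i| * (l1 (w i) + |b i|) ^ 2) • w i) z.1
        = (1 / (n:ℝ)) * ∑ i, (rsign (s i) * |a i| * (l1 (w i) + |b i|) ^ 2) * dot2 (w i) z.1 := by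
      rw [dot2_smul_left, dot2_sum_left]
      congr 1
      exact Finset.sum_congr rfl fun i _ => dot2_smul_left _ _ _
    have heq : ∑ i, rsign (s i) * (CC i * tt i z)
        = ε⁻¹ * M * ((1 / (n:ℝ))
            * ∑ i, (rsign (s i) * |a i| * (l1 (w i) + |b i|) ^ 2) * dot2 (w i) z.1) := by
      rw [Finset.mul_sum, Finset.mul_sum]
      refine Finset.sum_congr rfl fun i _ => ?_
      simp only [hCC, htt]; ring
    rw [heq, ← hdot]
    exact mul_le_mul_of_nonneg_left ((le_abs_self _).trans (abs_dot2_le_l1 _ z.2)) hinvM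
  have hnum : (∑ s : Fin n → Bool, ⨆ z : {z : Vec d × Vec d // InCube z},
        (1 / (n:ℝ)) * ∑ i, rsign (s i) * a i * quadForm (A z.1.1) (w i).1
          * deriv (deriv σ) ((dot2 (w i) z.1 + b i) / ε))
      ≤ ε⁻¹ * M * ∑ s : Fin n → Bool,
          l1 ((1 / (n:ℝ)) • ∑ i, (rsign (s i) * |a i| * (l1 (w i) + |b i|) ^ 2) • w i) := by
    calc (∑ s : Fin n → Bool, ⨆ z : {z : Vec d × Vec d // InCube z},
          (1 / (n:ℝ)) * ∑ i, rsign (s i) * a i * quadForm (A z.1.1) (w i).1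
            * deriv (deriv σ) ((dot2 (w i) z.1 + b i) / ε))
        = ∑ s : Fin n → Bool, ⨆ z : {z : Vec d × Vec d // InCube z},
            ∑ i, rsign (s i) * hh i z := Finset.sum_congr rfl fun s _ => eL s
      _ ≤ ∑ s : Fin n → Bool, ⨆ z : {z : Vec d × Vec d // InCube z},
            ∑ i, rsign (s i) * (CC i * tt i z) := main
      _ ≤ ∑ s : Fin n → Bool, ε⁻¹ * M
            * l1 ((1 / (n:ℝ)) • ∑ i, (rsign (s i) * |a i| * (l1 (w i) + |b i|) ^ 2) • w i) :=
          Finset.sum_le_sum fun s _ => eR s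
      _ = ε⁻¹ * M * ∑ s : Fin n → Bool,
            l1 ((1 / (n:ℝ)) • ∑ i, (rsign (s i) * |a i| * (l1 (w i) + |b i|) ^ 2) • w i) := by
          rw [Finset.mul_sum]
  have h2 : (0:ℝ) < 2 ^ n := by positivity
  calc (∑ s : Fin n → Bool, ⨆ z : {z : Vec d × Vec d // InCube z},
        (1 / (n:ℝ)) * ∑ i, rsign (s i) * a i * quadForm (A z.1.1) (w i).1
          * deriv (deriv σ) ((dot2 (w i) z.1 + b i) / ε)) / 2 ^ n
      ≤ (ε⁻¹ * M * ∑ s : Fin n → Bool,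
          l1 ((1 / (n:ℝ)) • ∑ i, (rsign (s i) * |a i| * (l1 (w i) + |b i|) ^ 2) • w i)) / 2 ^ n := by
        gcongr
    _ = ε⁻¹ * M * ((∑ s : Fin n → Bool,
          l1 ((1 / (n:ℝ)) • ∑ i, (rsign (s i) * |a i| * (l1 (w i) + |b i|) ^ 2) • w i)) / 2 ^ n) := by
        ring
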